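/- Let A ∈ ℝ₊^{r×s} have full column rank and let N be a bounded neighborhood of A whose closure consists of full-column-rank nonnegative matrices. Then there exists a constant J₁ such that for every A' in the closure of N and every nonempty index set T ⊆ {1,…,s}, the spectral norm of (A'_{:,T})† is at most J₁; consequently ‖q(A', x')‖ ≤ J₁‖x'‖ for all A' ∈ N and x' ∈ ℝ₊^r. -/

import Mathlib

open Matrix

/-- Moore–Penrose pseudoinverse of a full-column-rank real matrix. -/
noncomputable def pinv {m n : Type*} [Fintype m] [Fintype n] [DecidableEq n]
    (A : Matrix m n ℝ) : Matrix n m ℝ := (Aᵀ * A)⁻¹ * Aᵀ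

/-- Spectral (ℓ²-operator) norm of a real matrix. -/
noncomputable def specNorm {m n : Type*} [Fintype m] [Fintype n] [DecidableEq m]
    [DecidableEq n] (M : Matrix m n ℝ) : ℝ :=
  ‖LinearMap.toContinuousLinearMap (Matrix.toEuclideanLin M)‖

/-- Euclidean norm of a vector. -/
noncomputable def euclid {n : Type*} [Fintype n] (v : n → ℝ) : ℝ :=
  Real.sqrt (∑ i, v i ^ 2)

/-- `v` is the nonnegative least squares solution for `A`, `x`. -/
def IsNNLS {r s : ℕ} (A : Matrix (Fin r) (Fin s) ℝ) (x : Fin r → ℝ) (v : Fin s → ℝ) : Prop :=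
  (∀ j, 0 ≤ v j) ∧
    ∀ w : Fin s → ℝ, (∀ j, 0 ≤ w j) →
      ∑ i, (x i - A.mulVec v i) ^ 2 ≤ ∑ i, (x i - A.mulVec w i) ^ 2

/-! On the compact set `closure N` every column submatrix `C` of `B` has injective `mulVec`, so
its Gram matrix `Cᵀ * C` is invertible and `C ↦ pinv C` is continuous there; hence each of the
finitely many maps `B ↦ specNorm (pinv C_T(B))` is bounded on `closure N`. For the NNLS solution
`v` with support `T`, the first-order condition in each coordinate `j ∈ T` gives the normal
equations `Cᵀ C v_T = Cᵀ x`, so `v_T = pinv C x` and `‖v‖ = ‖v_T‖ ≤ ‖pinv C‖ ‖x‖`.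
Bounding over all `T`, including `∅`, also covers `v = 0`. -/

open Filter Topology Function

namespace Matrix

variable {m n n₀ K : Type*} [Fintype n]

theorem mulVec_injective_of_rank_eq_card [Field K] {A : Matrix m n K}
    (h : A.rank = Fintype.card n) : Injective A.mulVec := by
  rw [mulVec_injective_iff, linearIndependent_iff_card_eq_finrank_span, ← h,
    rank_eq_finrank_span_cols]
  rfl

theorem mulVec_injective_submatrix [Fintype n₀] [CommRing K] {A : Matrix m n K}
    (hA : Injective A.mulVec) {c : n₀ → n} (hc : Injective c) :
    Injective (A.submatrix id c).mulVec := by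
  rw [mulVec_injective_iff] at hA ⊢
  convert hA.comp c hc
  ext
  simp

theorem isUnit_transpose_mul_self [Fintype m] [DecidableEq n] [Field K] [LinearOrder K]
    [IsStrictOrderedRing K] {A : Matrix m n K} (hA : Injective A.mulVec) : IsUnit (Aᵀ * A) := by
  rw [← mulVec_injective_iff_isUnit, ← coe_mulVecLin, ← LinearMap.ker_eq_bot,
    ker_mulVecLin_transpose_mul_self, LinearMap.ker_eq_bot]
  exact hA

theorem submatrix_val_mulVec_of_eq_zero [NonUnitalNonAssocSemiring K] {A : Matrix m n K}
    {T : Finset n} {v : n → K}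
    (hv : ∀ j ∉ T, v j = 0) :
    A.submatrix id (Subtype.val : {j // j ∈ T} → n) *ᵥ (fun j => v j) = A *ᵥ v := by
  ext i
  simp only [mulVec, dotProduct, submatrix_apply, id]
  rw [Finset.sum_coe_sort T fun j => A i j * v j]
  exact Finset.sum_subset (Finset.subset_univ T) fun j _ hj => by simp [hv j hj]

end Matrix

section PseudoInverse

variable {m n : Type*} [Fintype m] [Fintype n] [DecidableEq n]

theorem eq_pinv_mulVec_of_normal_eq {C : Matrix m n ℝ} (hC : IsUnit (Cᵀ * C)) {u : n → ℝ}
    {x : m → ℝ} (h : Cᵀ *ᵥ (C *ᵥ u) = Cᵀ *ᵥ x) : u = pinv C *ᵥ x := by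
  rw [pinv, ← mulVec_mulVec, ← h, mulVec_mulVec, mulVec_mulVec, Matrix.mul_assoc,
    nonsing_inv_mul _ ((isUnit_iff_isUnit_det _).mp hC), one_mulVec]

theorem continuousOn_pinv :
    ContinuousOn (pinv : Matrix m n ℝ → Matrix n m ℝ) {C | IsUnit (Cᵀ * C)} := by
  intro C hC
  have hgram : Continuous fun C : Matrix m n ℝ => Cᵀ * C :=
    continuous_id.matrix_transpose.matrix_mul continuous_id
  have hinv : ContinuousAt (fun C : Matrix m n ℝ => (Cᵀ * C)⁻¹) C := by
    refine (continuousAt_matrix_inv _ ?_).comp hgram.continuousAt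
    obtain ⟨u, hu⟩ := (isUnit_iff_isUnit_det _).mp hC
    rw [← hu]
    exact NormedRing.inverse_continuousAt u
  exact ((continuous_fst.matrix_mul continuous_snd).continuousAt.comp
    (hinv.prodMk continuous_id.matrix_transpose.continuousAt)).continuousWithinAt

theorem continuous_specNorm [DecidableEq m] : Continuous (specNorm : Matrix m n ℝ → ℝ) :=
  continuous_norm.comp ((LinearMap.toContinuousLinearMap.toLinearMap ∘ₗ
    (toEuclideanLin (𝕜 := ℝ) (m := m) (n := n)).toLinearMap).continuous_of_finiteDimensional)

theorem euclid_eq_norm_toLp {n : Type*} [Fintype n] (v : n → ℝ) :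
    euclid v = ‖WithLp.toLp 2 v‖ := by
  simp [euclid, EuclideanSpace.norm_eq]

theorem euclid_nonneg {n : Type*} [Fintype n] (v : n → ℝ) : 0 ≤ euclid v :=
  Real.sqrt_nonneg _

theorem euclid_mulVec_le [DecidableEq m] (M : Matrix m n ℝ) (x : n → ℝ) :
    euclid (M *ᵥ x) ≤ specNorm M * euclid x := by
  rw [euclid_eq_norm_toLp, euclid_eq_norm_toLp]
  exact (LinearMap.toContinuousLinearMap (toEuclideanLin M)).le_opNorm (WithLp.toLp 2 x)

theorem euclid_restrict {n : Type*} [Fintype n] {T : Finset n} {v : n → ℝ}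
    (hv : ∀ j ∉ T, v j = 0) : euclid (fun j : {j // j ∈ T} => v j) = euclid v := by
  rw [euclid, euclid, Finset.sum_coe_sort T fun j => v j ^ 2,
    Finset.sum_subset (Finset.subset_univ T) fun j _ hj => by simp [hv j hj]]

end PseudoInverse

theorem eq_zero_of_eventually_nonneg_quadratic {g c : ℝ}
    (h : ∀ᶠ t in 𝓝 0, 0 ≤ 2 * t * g + t ^ 2 * c) : g = 0 := by
  have hmin : IsLocalMin (fun t => 2 * t * g + t ^ 2 * c) 0 := by
    filter_upwards [h] with t ht
    simpa using ht
  have hlin : HasDerivAt (fun t => 2 * t * g) (2 * g) 0 := by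
    simpa using ((hasDerivAt_id' (0 : ℝ)).const_mul 2).mul_const g
  have hsq : HasDerivAt (fun t : ℝ => t ^ 2 * c) 0 0 := by
    simpa using (hasDerivAt_pow 2 (0 : ℝ)).mul_const c
  linarith [hmin.hasDerivAt_eq_zero (by simpa using hlin.fun_add hsq)]

namespace IsNNLS

variable {r s : ℕ} {B : Matrix (Fin r) (Fin s) ℝ} {x : Fin r → ℝ} {v : Fin s → ℝ}

theorem transpose_mulVec_residual_eq_zero (hv : IsNNLS B x v) {j : Fin s} (hj : 0 < v j) :
    (Bᵀ *ᵥ (B *ᵥ v - x)) j = 0 := by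
  refine eq_zero_of_eventually_nonneg_quadratic (c := ∑ i, B i j ^ 2) ?_
  -- `v + t • e_j` stays feasible for `t > -v j`, a neighbourhood of `0`.
  filter_upwards [Ioi_mem_nhds (neg_lt_zero.mpr hj)] with t ht
  have hw : ∀ k, 0 ≤ (v + Pi.single j t : Fin s → ℝ) k := by
    intro k
    by_cases hk : k = j
    · subst hk
      simp only [Pi.add_apply, Pi.single_eq_same]
      linarith [Set.mem_Ioi.mp ht]
    · simpa [hk] using hv.1 k
  have hexpand : ∑ i, (x i - (B *ᵥ (v + Pi.single j t)) i) ^ 2 =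
      ∑ i, (x i - (B *ᵥ v) i) ^ 2 +
        (2 * t * (Bᵀ *ᵥ (B *ᵥ v - x)) j + t ^ 2 * ∑ i, B i j ^ 2) := by
    rw [mulVec_add, mulVec_single]
    simp only [Pi.add_apply, Pi.smul_apply, op_smul_eq_mul, col_apply, mulVec, dotProduct,
      transpose_apply, Pi.sub_apply, Finset.mul_sum, ← Finset.sum_add_distrib]
    exact Finset.sum_congr rfl fun i _ => by ring
  linarith [hv.2 _ hw]

theorem exists_euclid_le_specNorm_pinv_mul (hv : IsNNLS B x v) (hB : Injective B.mulVec) :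
    ∃ T : Finset (Fin s), euclid v ≤
      specNorm (pinv (B.submatrix id (Subtype.val : {j // j ∈ T} → Fin s))) * euclid x := by
  set T : Finset (Fin s) := Finset.univ.filter fun j => 0 < v j
  set C := B.submatrix id (Subtype.val : {j // j ∈ T} → Fin s)
  have hvT : ∀ j ∉ T, v j = 0 := fun j hj =>
    le_antisymm (not_lt.mp fun h => hj (Finset.mem_filter.mpr ⟨Finset.mem_univ j, h⟩)) (hv.1 j)
  have hnormal : Cᵀ *ᵥ (C *ᵥ fun j => v j) = Cᵀ *ᵥ x := by
    ext j
    have := hv.transpose_mulVec_residual_eq_zero (Finset.mem_filter.mp j.2).2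
    rw [mulVec_sub, Pi.sub_apply, sub_eq_zero] at this
    rw [submatrix_val_mulVec_of_eq_zero hvT]
    exact this
  have hpinv := eq_pinv_mulVec_of_normal_eq
    (isUnit_transpose_mul_self (mulVec_injective_submatrix hB Subtype.val_injective)) hnormal
  refine ⟨T, ?_⟩
  calc euclid v = euclid fun j : {j // j ∈ T} => v j := (euclid_restrict hvT).symm
    _ = euclid (pinv C *ᵥ x) := by rw [← hpinv]
    _ ≤ specNorm (pinv C) * euclid x := euclid_mulVec_le _ _

end IsNNLS

theorem IsCompact.exists_forall_specNorm_pinv_submatrix_le {m n : Type*} [Fintype m] [Fintype n]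
    [DecidableEq m] [DecidableEq n] {K : Set (Matrix m n ℝ)} (hK : IsCompact K)
    (hinj : ∀ B ∈ K, Injective B.mulVec) :
    ∃ J, ∀ B ∈ K, ∀ T : Finset n,
      specNorm (pinv (B.submatrix id (Subtype.val : {j // j ∈ T} → n))) ≤ J := by
  have hbdd (T : Finset n) : BddAbove
      ((fun B => specNorm (pinv (B.submatrix id (Subtype.val : {j // j ∈ T} → n)))) '' K) :=
    hK.bddAbove_image <| continuous_specNorm.comp_continuousOn <|
      continuousOn_pinv.comp (continuous_id.matrix_submatrix _ _).continuousOn fun B hB =>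
        isUnit_transpose_mul_self (mulVec_injective_submatrix (hinj B hB) Subtype.val_injective)
  choose J hJ using hbdd
  obtain ⟨J₁, hJ₁⟩ := Finite.bddAbove_range J
  exact ⟨J₁, fun B hB T => (hJ T ⟨B, hB, rfl⟩).trans (hJ₁ ⟨T, rfl⟩)⟩

theorem uniform_pinv_bound_general {r s : ℕ}
    (Q : (Fin r → Fin s → ℝ) → (Fin r → ℝ) → (Fin s → ℝ))
    (hQ : ∀ B y, (∀ i j, 0 ≤ B i j) → (∀ i, 0 ≤ y i) → (Matrix.of B).rank = s →
      IsNNLS (Matrix.of B) y (Q B y))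
    (N : Set (Fin r → Fin s → ℝ)) (hNbd : Bornology.IsBounded N)
    (hNcl : ∀ B ∈ closure N, (∀ i j, 0 ≤ B i j) ∧ (Matrix.of B).rank = s) :
    ∃ J₁ : ℝ,
      (∀ B ∈ closure N, ∀ T : Finset (Fin s), T.Nonempty →
        specNorm (pinv ((Matrix.of B).submatrix id
          (Subtype.val : {j // j ∈ T} → Fin s))) ≤ J₁) ∧
      ∀ B ∈ N, ∀ x : Fin r → ℝ, (∀ i, 0 ≤ x i) → euclid (Q B x) ≤ J₁ * euclid x := by
  have hinj : ∀ B ∈ closure N, Injective (Matrix.of B).mulVec := fun B hB =>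
    mulVec_injective_of_rank_eq_card (by rw [(hNcl B hB).2, Fintype.card_fin])
  obtain ⟨J, hJ⟩ := hNbd.isCompact_closure.exists_forall_specNorm_pinv_submatrix_le hinj
  refine ⟨J, fun B hB T _ => hJ B hB T, fun B hB x hx => ?_⟩
  have hBcl := subset_closure hB
  obtain ⟨hB0, hBrank⟩ := hNcl B hBcl
  obtain ⟨T, hT⟩ := (hQ B x hB0 hx hBrank).exists_euclid_le_specNorm_pinv_mul (hinj B hBcl)
  exact hT.trans (mul_le_mul_of_nonneg_right (hJ B hBcl T) (euclid_nonneg x))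

/-- a uniform bound `J₁` on the spectral norms of the pseudoinverses of
all column submatrices over the closure of a bounded neighborhood `N`; consequently
`‖q(A',x')‖ ≤ J₁ ‖x'‖` for `A' ∈ N` and nonnegative `x'`. -/
theorem uniform_pinv_bound {r s : ℕ} (hrs : s ≤ r)
    (Q : (Fin r → Fin s → ℝ) → (Fin r → ℝ) → (Fin s → ℝ))
    (hQ : ∀ B y, (∀ i j, 0 ≤ B i j) → (∀ i, 0 ≤ y i) → (Matrix.of B).rank = s →
      IsNNLS (Matrix.of B) y (Q B y))
    (A : Fin r → Fin s → ℝ) (hA0 : ∀ i j, 0 ≤ A i j) (hArank : (Matrix.of A).rank = s)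
    (N : Set (Fin r → Fin s → ℝ)) (hN : N ∈ nhds A) (hNbd : Bornology.IsBounded N)
    (hNcl : ∀ B ∈ closure N, (∀ i j, 0 ≤ B i j) ∧ (Matrix.of B).rank = s) :
    ∃ J₁ : ℝ,
      (∀ B ∈ closure N, ∀ T : Finset (Fin s), T.Nonempty →
        specNorm (pinv ((Matrix.of B).submatrix id
          (Subtype.val : {j // j ∈ T} → Fin s))) ≤ J₁) ∧
      ∀ B ∈ N, ∀ x : Fin r → ℝ, (∀ i, 0 ≤ x i) → euclid (Q B x) ≤ J₁ * euclid x :=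
  uniform_pinv_bound_general Q hQ N hNbd hNcl
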